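/- (Corollary 2.9.) Let n = 2 and fix an integer k ≥ 2. Assume that for every t ∈ ℂ one has rank M^1_{k-1}(t) = k and rank M^1_k(t) ≤ k (i.e. Φ_{k−1}(C_1) = ∅ but Φ_k(C_1) = C_1). Then for every t ∈ ℂ, every s ∈ {1,2} and every u ∈ ℂ: rank M^{X,s}_k(t, u) ≤ 2k if and only if either (s, u) = (1, 0) (the point lies on C_1) or rank M^2_k(t) ≤ k (the fibre passes through a point of Φ_k(C_2)). In other words, Φ_k(X) consists of C_1 together with the fibres containing a point of Φ_k(C_2). -/

import Mathlib

/-!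
On the fibre of the scroll through the parameter-`t` points `p_0, p_1` (index `0` is the curve
`C_1` of the paper), the `k`-th osculating space of `X` is spanned by the `(k-1)`-th osculating
spaces of the two curves, sitting in complementary coordinate blocks, and by the single vector
`x^{(k)} = p_s^{(k)} + u_i p_i^{(k)}`. Since `Osc^k(C_1) = Osc^{k-1}(C_1)` has dimension `k`,
the `C_1`-component of `x^{(k)}` can be dropped, so the rank is
`k + dim(Osc^{k-1}(C_2) + ⟨c p_1^{(k)}⟩)` with `c` the coefficient of `p_1^{(k)}`. This is at
most `2k` automatically when `c = 0` (the point lies on `C_1`), and otherwise exactly when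
`Osc^k(C_2)` has dimension at most `k`.
-/

open Matrix

/-- The `k`-th jet matrix `M^i_k(t)` of a parametrized curve. -/
noncomputable def curveJet (r : ℕ) (a : ℂ → Fin (r + 1) → ℂ) (k : ℕ) (t : ℂ) :
    Matrix (Fin (k + 1)) (Fin (r + 1)) ℂ :=
  Matrix.of fun l j => iteratedDeriv (l : ℕ) (fun s => a s j) t

/-- The `i`-th block inclusion `ι_i : ℂ^{r_i+1} → V`. -/
noncomputable def blockIncl {n : ℕ} (r : Fin n → ℕ) (i : Fin n)
    (v : Fin (r i + 1) → ℂ) : (Σ j : Fin n, Fin (r j + 1)) → ℂ :=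
  fun p => if h : p.1 = i then v (Fin.cast (by rw [h]) p.2) else 0

/-- The `k`-th jet matrix `M^{X,s}_k(t,u)` of the decomposable scroll. -/
noncomputable def scrollJet {n : ℕ} (r : Fin n → ℕ)
    (a : ∀ i : Fin n, ℂ → Fin (r i + 1) → ℂ) (k : ℕ) (s : Fin n) (t : ℂ)
    (u : Fin n → ℂ) :
    Matrix (Fin (k + 1) ⊕ ({i : Fin n // i ≠ s} × Fin k))
      (Σ j : Fin n, Fin (r j + 1)) ℂ :=
  Matrix.of fun row =>
    match row with
    | Sum.inl l =>
        blockIncl r s (curveJet (r s) (a s) k t l) +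
          ∑ i ∈ Finset.univ.filter (fun i => i ≠ s),
            u i • blockIncl r i (curveJet (r i) (a i) k t l)
    | Sum.inr q =>
        blockIncl r q.1.1 (curveJet (r q.1.1) (a q.1.1) k t q.2.castSucc)

/-- The row space of a matrix, i.e. the span of its rows. -/
noncomputable def rowSpace {m α : Type*} [Fintype m] (M : Matrix m α ℂ) : Submodule ℂ (α → ℂ) :=
  Submodule.span ℂ (Set.range fun i => M i)

open Submodule Module

lemma iSup_fin_two {α : Type*} [CompleteLattice α] (f : Fin 2 → α) : ⨆ i, f i = f 0 ⊔ f 1 :=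
  le_antisymm (iSup_le fun i => by fin_cases i; exacts [le_sup_left, le_sup_right])
    (sup_le (le_iSup f 0) (le_iSup f 1))

lemma sup_span_singleton_add_of_mem {R M : Type*} [Ring R] [AddCommGroup M] [Module R M]
    {A : Submodule R M} {a : M} (ha : a ∈ A) (b : M) : A ⊔ R ∙ (a + b) = A ⊔ R ∙ b := by
  have key : ∀ {x y : M}, x ∈ A → A ⊔ R ∙ (x + y) ≤ A ⊔ R ∙ y := fun hx =>
    sup_le le_sup_left ((span_singleton_le_iff_mem _ _).2
      (add_mem (mem_sup_left hx) (mem_sup_right (mem_span_singleton_self _))))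
  refine le_antisymm (key ha) ?_
  simpa only [neg_add_cancel_left] using key (y := a + b) (neg_mem ha)

section BlockIncl

variable {n : ℕ} (r : Fin n → ℕ)

noncomputable def blockInclₗ (i : Fin n) :
    (Fin (r i + 1) → ℂ) →ₗ[ℂ] (Σ j : Fin n, Fin (r j + 1)) → ℂ where
  toFun := blockIncl r i
  map_add' v w := by ext p; simp only [blockIncl, Pi.add_apply]; split <;> simp
  map_smul' c v := by ext p; simp only [blockIncl, Pi.smul_apply, RingHom.id_apply]; split <;> simp

lemma blockInclₗ_apply_self (i : Fin n) (v : Fin (r i + 1) → ℂ) (j : Fin (r i + 1)) :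
    blockInclₗ r i v ⟨i, j⟩ = v j := by
  simp [blockInclₗ, blockIncl]

lemma blockInclₗ_apply_of_ne {i : Fin n} (v : Fin (r i + 1) → ℂ) {p : Σ j : Fin n, Fin (r j + 1)}
    (h : p.1 ≠ i) : blockInclₗ r i v p = 0 :=
  dif_neg h

lemma blockInclₗ_injective (i : Fin n) : Function.Injective (blockInclₗ r i) := fun v w h =>
  funext fun j => by simpa only [blockInclₗ_apply_self] using congr_fun h ⟨i, j⟩

lemma disjoint_map_blockInclₗ {i j : Fin n} (hij : i ≠ j) (P : Submodule ℂ (Fin (r i + 1) → ℂ))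
    (Q : Submodule ℂ (Fin (r j + 1) → ℂ)) :
    Disjoint (P.map (blockInclₗ r i)) (Q.map (blockInclₗ r j)) := by
  rw [disjoint_def]
  rintro _ ⟨v, -, rfl⟩ ⟨w, -, hw⟩
  have hv : v = 0 := by
    funext l
    simpa only [blockInclₗ_apply_self, blockInclₗ_apply_of_ne r w (p := ⟨i, l⟩) hij,
      Pi.zero_apply] using (congr_fun hw ⟨i, l⟩).symm
  rw [hv, map_zero]

lemma finrank_map_blockInclₗ_sup {i j : Fin n} (hij : i ≠ j)
    (P : Submodule ℂ (Fin (r i + 1) → ℂ)) (Q : Submodule ℂ (Fin (r j + 1) → ℂ)) :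
    finrank ℂ ↥(P.map (blockInclₗ r i) ⊔ Q.map (blockInclₗ r j)) = finrank ℂ P + finrank ℂ Q := by
  have h := finrank_sup_add_finrank_inf_eq (P.map (blockInclₗ r i)) (Q.map (blockInclₗ r j))
  rwa [(disjoint_map_blockInclₗ r hij P Q).eq_bot, finrank_bot, add_zero,
    (equivMapOfInjective _ (blockInclₗ_injective r i) P).finrank_eq.symm,
    (equivMapOfInjective _ (blockInclₗ_injective r j) Q).finrank_eq.symm] at h

end BlockIncl

section RowSpace

variable {m α : Type*} [Fintype m] (M : Matrix m α ℂ)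

lemma mem_rowSpace (i : m) : M i ∈ rowSpace M :=
  subset_span ⟨i, rfl⟩

lemma rowSpace_le_iff {p : Submodule ℂ (α → ℂ)} : rowSpace M ≤ p ↔ ∀ i, M i ∈ p := by
  rw [rowSpace, span_le, Set.range_subset_iff]
  rfl

lemma rank_eq_finrank_rowSpace [Fintype α] : M.rank = finrank ℂ (rowSpace M) :=
  Matrix.rank_eq_finrank_span_row M

end RowSpace

section CurveJet

variable {r : ℕ} (a : ℂ → Fin (r + 1) → ℂ) (t : ℂ) (m : ℕ)

lemma curveJet_castSucc (l : Fin (m + 1)) :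
    curveJet r a (m + 1) t l.castSucc = curveJet r a m t l :=
  rfl

lemma rowSpace_curveJet_succ :
    rowSpace (curveJet r a (m + 1) t) =
      rowSpace (curveJet r a m t) ⊔ ℂ ∙ curveJet r a (m + 1) t (Fin.last _) := by
  apply le_antisymm
  · refine (rowSpace_le_iff _).2 fun l => ?_
    induction l using Fin.lastCases with
    | last => exact mem_sup_right (mem_span_singleton_self _)
    | cast l => exact mem_sup_left (mem_rowSpace _ l)
  · exact sup_le ((rowSpace_le_iff _).2 fun l => mem_rowSpace _ l.castSucc)
      ((span_singleton_le_iff_mem _ _).2 (mem_rowSpace _ _))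

lemma curveJet_last_mem_rowSpace (h1 : (curveJet r a m t).rank = m + 1)
    (h2 : (curveJet r a (m + 1) t).rank ≤ m + 1) :
    curveJet r a (m + 1) t (Fin.last _) ∈ rowSpace (curveJet r a m t) := by
  rw [rank_eq_finrank_rowSpace] at h1 h2
  rw [← span_singleton_le_iff_mem, ← sup_eq_left]
  refine (eq_of_le_of_finrank_le le_sup_left ?_).symm
  rw [← rowSpace_curveJet_succ]
  omega

end CurveJet

section Scroll

variable {n : ℕ} (r : Fin n → ℕ) (a : ∀ i : Fin n, ℂ → Fin (r i + 1) → ℂ) (k : ℕ) (s : Fin n)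
  (t : ℂ) (u : Fin n → ℂ)

lemma scrollJet_inl (l : Fin (k + 1)) :
    scrollJet r a k s t u (.inl l) = blockInclₗ r s (curveJet (r s) (a s) k t l) +
      ∑ i ∈ Finset.univ.filter (· ≠ s), u i • blockInclₗ r i (curveJet (r i) (a i) k t l) :=
  rfl

-- Subtracting the fibre rows `ι_i(a_i^{(l)})`, `l < k`, from the top rows leaves only the last one.
theorem rowSpace_scrollJet_succ (m : ℕ) :
    rowSpace (scrollJet r a (m + 1) s t u) =
      (⨆ j, (rowSpace (curveJet (r j) (a j) m t)).map (blockInclₗ r j)) ⊔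
        ℂ ∙ scrollJet r a (m + 1) s t u (.inl (Fin.last _)) := by
  set W := ⨆ j, (rowSpace (curveJet (r j) (a j) m t)).map (blockInclₗ r j)
  have hW : ∀ j l, blockInclₗ r j (curveJet (r j) (a j) m t l) ∈ W := fun j l =>
    mem_iSup_of_mem j (mem_map_of_mem (mem_rowSpace _ l))
  apply le_antisymm
  · refine (rowSpace_le_iff _).2 ?_
    rintro (l | ⟨j, l⟩)
    · induction l using Fin.lastCases with
      | last => exact mem_sup_right (mem_span_singleton_self _)
      | cast l =>
        rw [scrollJet_inl]
        exact mem_sup_left (add_mem (hW s l) (sum_mem fun i _ => smul_mem _ _ (hW i l)))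
    · exact mem_sup_left (hW j l)
  · refine sup_le (iSup_le fun j => ?_) ((span_singleton_le_iff_mem _ _).2 (mem_rowSpace _ _))
    have hfibre : ∀ i (hi : i ≠ s) l,
        blockInclₗ r i (curveJet (r i) (a i) m t l) ∈ rowSpace (scrollJet r a (m + 1) s t u) :=
      fun i hi l => mem_rowSpace (scrollJet r a (m + 1) s t u) (Sum.inr (⟨i, hi⟩, l))
    refine map_le_iff_le_comap.2 ((rowSpace_le_iff _).2 fun l => mem_comap.2 ?_)
    by_cases hj : j = s
    · subst hj
      have hsum : ∑ i ∈ Finset.univ.filter (· ≠ j),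
          u i • blockInclₗ r i (curveJet (r i) (a i) m t l) ∈
            rowSpace (scrollJet r a (m + 1) j t u) :=
        sum_mem fun i hi => smul_mem _ (u i) (hfibre i (Finset.mem_filter.1 hi).2 l)
      have hrow := sub_mem (mem_rowSpace _ (.inl l.castSucc)) hsum
      simpa only [scrollJet_inl, curveJet_castSucc, add_sub_cancel_right] using hrow
    · exact hfibre j hj l

end Scroll

section TwoCurves

variable (r : Fin 2 → ℕ) (a : ∀ i : Fin 2, ℂ → Fin (r i + 1) → ℂ) (t : ℂ) (u : Fin 2 → ℂ) (m : ℕ)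

lemma scrollJet_fin_two_inl {k : ℕ} {s i : Fin 2} (h : i ≠ s) (l : Fin (k + 1)) :
    scrollJet r a k s t u (.inl l) = blockInclₗ r s (curveJet (r s) (a s) k t l) +
      u i • blockInclₗ r i (curveJet (r i) (a i) k t l) := by
  have hfilter : Finset.univ.filter (· ≠ s) = {i} := by
    ext j
    fin_cases s <;> fin_cases i <;> fin_cases j <;> simp_all
  rw [scrollJet_inl, hfilter, Finset.sum_singleton]

variable {r a t m}

lemma finrank_rowSpace_scrollJet_zero
    (hflex : curveJet (r 0) (a 0) (m + 1) t (Fin.last _) ∈ rowSpace (curveJet (r 0) (a 0) m t)) :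
    finrank ℂ (rowSpace (scrollJet r a (m + 1) 0 t u)) =
      finrank ℂ (rowSpace (curveJet (r 0) (a 0) m t)) +
        finrank ℂ ↥(rowSpace (curveJet (r 1) (a 1) m t) ⊔
          ℂ ∙ (u 1 • curveJet (r 1) (a 1) (m + 1) t (Fin.last _))) := by
  rw [rowSpace_scrollJet_succ, iSup_fin_two, scrollJet_fin_two_inl r a t u (i := 1) (by decide),
    sup_span_singleton_add_of_mem (mem_sup_left (mem_map_of_mem hflex)), sup_assoc,
    ← LinearMap.map_smul, ← Set.image_singleton, ← map_span, ← Submodule.map_sup,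
    finrank_map_blockInclₗ_sup r (by decide)]

lemma finrank_rowSpace_scrollJet_one
    (hflex : curveJet (r 0) (a 0) (m + 1) t (Fin.last _) ∈ rowSpace (curveJet (r 0) (a 0) m t)) :
    finrank ℂ (rowSpace (scrollJet r a (m + 1) 1 t u)) =
      finrank ℂ (rowSpace (curveJet (r 0) (a 0) m t)) +
        finrank ℂ (rowSpace (curveJet (r 1) (a 1) (m + 1) t)) := by
  rw [rowSpace_scrollJet_succ, iSup_fin_two, scrollJet_fin_two_inl r a t u (i := 0) (by decide),
    add_comm (blockInclₗ r 1 _),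
    sup_span_singleton_add_of_mem (mem_sup_left (smul_mem _ (u 0) (mem_map_of_mem hflex))), sup_assoc,
    ← Set.image_singleton, ← map_span, ← Submodule.map_sup, ← rowSpace_curveJet_succ,
    finrank_map_blockInclₗ_sup r (by decide)]

end TwoCurves

theorem statement15_general (r : Fin 2 → ℕ)
    (a : ∀ i : Fin 2, ℂ → Fin (r i + 1) → ℂ)
    (k : ℕ) (hk : 2 ≤ k)
    (h1 : ∀ t : ℂ, (curveJet (r 0) (a 0) (k - 1) t).rank = k)
    (h2 : ∀ t : ℂ, (curveJet (r 0) (a 0) k t).rank ≤ k) :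
    ∀ (t : ℂ) (s : Fin 2) (u : Fin 2 → ℂ),
      (scrollJet r a k s t u).rank ≤ 2 * k ↔
        ((s = 0 ∧ ∀ i, i ≠ s → u i = 0) ∨
          (curveJet (r 1) (a 1) k t).rank ≤ k) := by
  intro t s u
  obtain ⟨m, rfl⟩ : ∃ m, k = m + 1 := ⟨k - 1, by omega⟩
  have hosc := h1 t
  rw [Nat.add_sub_cancel] at hosc
  have hflex := curveJet_last_mem_rowSpace (a 0) t m hosc (h2 t)
  rw [rank_eq_finrank_rowSpace] at hosc
  rw [rank_eq_finrank_rowSpace, rank_eq_finrank_rowSpace]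
  obtain rfl | rfl : s = 0 ∨ s = 1 := by fin_cases s <;> simp
  · rw [finrank_rowSpace_scrollJet_zero u hflex, hosc]
    by_cases hu : u 1 = 0
    · have hP1 : finrank ℂ ↥(rowSpace (curveJet (r 1) (a 1) m t) ⊔
          ℂ ∙ (u 1 • curveJet (r 1) (a 1) (m + 1) t (Fin.last _))) ≤ m + 1 := by
        rw [hu, zero_smul, span_zero_singleton, sup_bot_eq, ← rank_eq_finrank_rowSpace]
        exact rank_le_height _
      exact iff_of_true (by omega)
        (Or.inl ⟨rfl, Fin.forall_fin_two.2 ⟨fun h => absurd rfl h, fun _ => hu⟩⟩)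
    · rw [span_singleton_smul_eq (IsUnit.mk0 _ hu), ← rowSpace_curveJet_succ,
        or_iff_right fun h => hu (h.2 1 one_ne_zero)]
      omega
  · rw [finrank_rowSpace_scrollJet_one u hflex, hosc, or_iff_right fun h => one_ne_zero h.1]
    omega

/-- Corollary 2.9: let `n = 2` and suppose `Φ_{k-1}(C_1) = ∅` but
`Φ_k(C_1) = C_1`.  Then a point of `X` lies in `Φ_k(X)` iff either it lies on `C_1`
(chart `s = 0` with `u = 0`) or its fibre passes through a point of `Φ_k(C_2)`. -/
theorem statement15 (r : Fin 2 → ℕ) (hr : ∀ i, 1 ≤ r i)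
    (a : ∀ i : Fin 2, ℂ → Fin (r i + 1) → ℂ)
    (hent : ∀ i j, Differentiable ℂ fun t => a i t j)
    (hnd : ∀ i t, (curveJet (r i) (a i) 1 t).rank = 2)
    (k : ℕ) (hk : 2 ≤ k)
    (h1 : ∀ t : ℂ, (curveJet (r 0) (a 0) (k - 1) t).rank = k)
    (h2 : ∀ t : ℂ, (curveJet (r 0) (a 0) k t).rank ≤ k) :
    ∀ (t : ℂ) (s : Fin 2) (u : Fin 2 → ℂ),
      (scrollJet r a k s t u).rank ≤ 2 * k ↔
        ((s = 0 ∧ ∀ i, i ≠ s → u i = 0) ∨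
          (curveJet (r 1) (a 1) k t).rank ≤ k) :=
  statement15_general r a k hk h1 h2
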